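/- Let H be a real Hilbert space, A : H ⇒ H a maximally monotone operator, and V a closed vector subspace of H. Then the partial inverse A_V, defined by (x,u) ∈ gra A_V ⟺ (P_V x + P_{V⊥} u, P_V u + P_{V⊥} x) ∈ gra A, is maximally monotone. -/

import Mathlib

/-!
The partial swap `S (x, u) = (P_V x + P_{V⊥} u, P_V u + P_{V⊥} x)` is a linear involution of
`H × H` that preserves the pairing `⟪x, u⟫`, because the cross terms between `V` and `V⊥` vanish.
Since `gra A_V = S⁻¹ (gra A)` and both monotonicity and maximality are phrased through the pairing
of differences of graph points, they transfer from `A` to `A_V`.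
-/

open scoped RealInnerProductSpace

/-- Partial inverse of a set-valued operator `A` with respect to a closed subspace `V`:
`(x, u) ∈ gra A_V ↔ (P_V x + P_{V⊥} u, P_V u + P_{V⊥} x) ∈ gra A`. -/
def partialInv {H : Type*} [NormedAddCommGroup H] [InnerProductSpace ℝ H] [CompleteSpace H]
    (A : H → Set H) (V : Submodule ℝ H) [CompleteSpace V] : H → Set H :=
  fun x => {u | ((V.orthogonalProjectionOnto u : H) + (x - (V.orthogonalProjectionOnto x : H)))
    ∈ A ((V.orthogonalProjectionOnto x : H) + (u - (V.orthogonalProjectionOnto u : H)))}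

section

variable {H : Type*} [NormedAddCommGroup H] [InnerProductSpace ℝ H]

def IsMonotoneOp (A : H → Set H) : Prop :=
  ∀ x y u v : H, u ∈ A x → v ∈ A y → 0 ≤ ⟪x - y, u - v⟫

/-- Maximality is stated pointwise: every pair monotonically related to the whole graph already
lies in it, which is equivalent to maximality of the graph among monotone graphs. -/
def IsMaximalMonotoneOp (A : H → Set H) : Prop :=
  IsMonotoneOp A ∧ ∀ x u : H, (∀ y v : H, v ∈ A y → 0 ≤ ⟪x - y, u - v⟫) → u ∈ A x

def graphComap (T : H × H → H × H) (A : H → Set H) : H → Set H :=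
  fun x => {u | (T (x, u)).2 ∈ A (T (x, u)).1}

section graphComap

variable {T : H × H → H × H} {A : H → Set H}

theorem isMonotoneOp_graphComap (hA : IsMonotoneOp A)
    (hT : ∀ p q, ⟪(T p - T q).1, (T p - T q).2⟫ = ⟪(p - q).1, (p - q).2⟫) :
    IsMonotoneOp (graphComap T A) := fun x y u v hu hv =>
  hT (x, u) (y, v) ▸ hA _ _ _ _ hu hv

theorem isMaximalMonotoneOp_graphComap (hA : IsMaximalMonotoneOp A)
    (hT : ∀ p q, ⟪(T p - T q).1, (T p - T q).2⟫ = ⟪(p - q).1, (p - q).2⟫)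
    (hT_surj : Function.Surjective T) : IsMaximalMonotoneOp (graphComap T A) := by
  refine ⟨isMonotoneOp_graphComap hA.1 hT, fun x u hxu => hA.2 _ _ fun y v hyv => ?_⟩
  obtain ⟨q, hq⟩ := hT_surj (y, v)
  have hq_mem : q.2 ∈ graphComap T A q.1 := by
    simpa [graphComap, hq] using hyv
  have h : 0 ≤ ⟪((x, u) - q).1, ((x, u) - q).2⟫ := hxu q.1 q.2 hq_mem
  rwa [← hT, hq] at h

end graphComap

namespace Submodule

variable (V : Submodule ℝ H) [V.HasOrthogonalProjection]

noncomputable def partialSwap (p : H × H) : H × H :=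
  (V.starProjection p.1 + (p.2 - V.starProjection p.2),
    V.starProjection p.2 + (p.1 - V.starProjection p.1))

theorem partialSwap_involutive : Function.Involutive V.partialSwap := by
  intro p
  have hP : ∀ a b, V.starProjection (V.starProjection a + (b - V.starProjection b)) =
      V.starProjection a := by
    intro a b
    simp [starProjection_eq_self_iff.mpr (V.starProjection_apply_mem _)]
  ext <;> simp only [partialSwap, hP] <;> abel

theorem partialSwap_sub (p q : H × H) :
    V.partialSwap (p - q) = V.partialSwap p - V.partialSwap q := by
  ext <;> simp only [partialSwap, Prod.fst_sub, Prod.snd_sub, map_sub] <;> abel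

theorem inner_partialSwap (p : H × H) :
    ⟪(V.partialSwap p).1, (V.partialSwap p).2⟫ = ⟪p.1, p.2⟫ := by
  have horth : ∀ a b, ⟪V.starProjection a, b - V.starProjection b⟫ = 0 := fun a b =>
    inner_right_of_mem_orthogonal (V.starProjection_apply_mem a)
      (V.sub_starProjection_mem_orthogonal b)
  have hsplit : ∀ a b c d : H,
      ⟪V.starProjection a + (b - V.starProjection b), V.starProjection c + (d - V.starProjection d)⟫ =
        ⟪V.starProjection a, V.starProjection c⟫ +
          ⟪b - V.starProjection b, d - V.starProjection d⟫ := by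
    intro a b c d
    rw [inner_add_left, inner_add_right, inner_add_right, horth a d,
      real_inner_comm (V.starProjection c) (b - _), horth c b]
    ring
  obtain ⟨a, b⟩ := p
  have hab := hsplit a a b b
  simp only [add_sub_cancel] at hab
  rw [partialSwap, hsplit, hab, real_inner_comm (a - _)]

end Submodule

theorem isMaximalMonotoneOp_partialInv [CompleteSpace H] {A : H → Set H} (V : Submodule ℝ H)
    [CompleteSpace V] (hA : IsMaximalMonotoneOp A) : IsMaximalMonotoneOp (partialInv A V) :=
  isMaximalMonotoneOp_graphComap hA
    (fun p q => by rw [← V.partialSwap_sub, V.inner_partialSwap])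
    V.partialSwap_involutive.surjective

end

theorem stmt17 {H : Type*} [NormedAddCommGroup H] [InnerProductSpace ℝ H] [CompleteSpace H]
    (A : H → Set H) (V : Submodule ℝ H) [CompleteSpace V]
    (hmono : ∀ x y u v : H, u ∈ A x → v ∈ A y → 0 ≤ ⟪x - y, u - v⟫)
    (hmax : ∀ x u : H, (∀ y v : H, v ∈ A y → 0 ≤ ⟪x - y, u - v⟫) → u ∈ A x) :
    (∀ x y u v : H, u ∈ partialInv A V x → v ∈ partialInv A V y → 0 ≤ ⟪x - y, u - v⟫) ∧
      (∀ x u : H, (∀ y v : H, v ∈ partialInv A V y → 0 ≤ ⟪x - y, u - v⟫) →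
        u ∈ partialInv A V x) :=
  isMaximalMonotoneOp_partialInv V ⟨hmono, hmax⟩
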